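/- Let T_i be an oriented circle and A ⊂ T_i a finite subset with n ≥ 1 elements. For any loop L in UConf_n(T_i) based at A, the monodromy permutation μ_L : A → A preserves the cyclic order on A induced by the orientation; consequently μ_L is a power of the canonical rotation ν of A. -/

import Mathlib

/-- The setoid on `Fin d → T` identifying tuples that differ by a permutation. -/
def symSetoid (T : Type*) (d : ℕ) : Setoid (Fin d → T) where
  r f g := ∃ σ : Equiv.Perm (Fin d), f ∘ σ = g
  iseqv := by
    refine ⟨fun f => ⟨Equiv.refl _, rfl⟩, ?_, ?_⟩
    · rintro f g ⟨σ, rfl⟩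
      exact ⟨σ.symm, by funext i; simp⟩
    · rintro f g h ⟨σ, rfl⟩ ⟨τ, rfl⟩
      exact ⟨τ.trans σ, rfl⟩

/-- The `d`-th symmetric power of `T`: the quotient of `T^d` by the permutation action of the
symmetric group `S_d`. -/
def SymPow (T : Type*) (d : ℕ) : Type _ := Quotient (symSetoid T d)

instance SymPow.instTopologicalSpace (T : Type*) [TopologicalSpace T] (d : ℕ) :
    TopologicalSpace (SymPow T d) :=
  instTopologicalSpaceQuotient

/-- The quotient map `T^d → Sym^d(T)`. -/
def SymPow.mk {T : Type*} {d : ℕ} (f : Fin d → T) : SymPow T d := Quotient.mk _ f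

/-- A point of `Sym^d(T)` is simple if it is the class of an injective tuple, i.e. it lies in
the complement `UConf_d(T)` of the image `Σ` of the big diagonal. -/
def SymPow.Simple {T : Type*} {d : ℕ} (x : SymPow T d) : Prop :=
  ∃ f : Fin d → T, Function.Injective f ∧ SymPow.mk f = x

/-- The unordered configuration space `UConf_d(T) = Sym^d(T) ∖ Σ`, the space of `d`-element
subsets of `T`. -/
def UConf (T : Type*) [TopologicalSpace T] (d : ℕ) : Type _ :=
  {x : SymPow T d // x.Simple}

instance UConf.instTopologicalSpace (T : Type*) [TopologicalSpace T] (d : ℕ) :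
    TopologicalSpace (UConf T d) :=
  inferInstanceAs (TopologicalSpace {x : SymPow T d // x.Simple})


instance : Fact ((0 : ℝ) < 1) := ⟨zero_lt_one⟩

/-- The standard oriented circle `ℝ/ℤ` (with the circular order induced by the standard
orientation). -/
abbrev Circ : Type := AddCircle (1 : ℝ)

/-!
Measure the circle from a moving base point by forward arc length: for distinct points this is
continuous, and three distinct points are positively oriented iff the second is reached before
the third. The strands of a loop in `UConf` never collide, so by the intermediate value theorem
each positively oriented triple of strands stays positively oriented. The monodromy therefore
preserves the cyclic order of `Fin n`, and such a permutation is a rotation: shifted so as to fix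
`0`, it is strictly monotone, hence the identity.
-/

namespace SymPow

variable {T : Type*} {d : ℕ}

lemma mk_eq_mk_iff {f g : Fin d → T} :
    SymPow.mk f = SymPow.mk g ↔ ∃ σ : Equiv.Perm (Fin d), f ∘ σ = g :=
  Quotient.eq

lemma injective_of_simple_mk {f : Fin d → T} (h : (SymPow.mk f).Simple) :
    Function.Injective f := by
  obtain ⟨g, hg, hgf⟩ := h
  obtain ⟨σ, rfl⟩ := mk_eq_mk_iff.1 hgf
  exact hg.comp σ.injective

end SymPow

namespace AddCircle

variable {p : ℝ} [hp : Fact (0 < p)]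

/-- The length of the positively oriented arc from `x` to `y`, taken in `(0, p]`. -/
noncomputable def forwardDist (x y : AddCircle p) : ℝ := equivIoc p 0 (y - x)

lemma forwardDist_injective (x : AddCircle p) : Function.Injective (forwardDist x) :=
  fun _ _ h => sub_left_injective ((equivIoc p 0).injective (Subtype.ext h))

lemma forwardDist_coe (x y : ℝ) :
    forwardDist (x : AddCircle p) y = toIocMod hp.out 0 (y - x) := by
  rw [forwardDist, ← coe_sub]
  rfl

lemma btw_iff_forwardDist_le {x y z : AddCircle p} (hxy : y ≠ x) :
    btw x y z ↔ forwardDist x y ≤ forwardDist x z := by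
  induction x using QuotientAddGroup.induction_on with | H x =>
  induction y using QuotientAddGroup.induction_on with | H y =>
  induction z using QuotientAddGroup.induction_on with | H z =>
  have hmod : ¬(0 : ℝ) ≡ y - x [PMOD p] := by
    rw [AddCommGroup.not_modEq_iff_ne_mod_zmultiples]
    exact fun h => hxy (sub_eq_zero.1 (by simpa [coe_sub] using h.symm))
  rw [QuotientAddGroup.btw_coe_iff', forwardDist_coe, forwardDist_coe,
    (AddCommGroup.not_modEq_iff_toIcoMod_eq_toIocMod hp.out).1 hmod]

lemma sbtw_iff_forwardDist_lt {x y z : AddCircle p} (hxy : x ≠ y) (hxz : x ≠ z)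
    (hyz : y ≠ z) : sbtw x y z ↔ forwardDist x y < forwardDist x z := by
  refine ⟨fun h => ?_, fun h => ?_⟩
  · exact ((btw_iff_forwardDist_le hxy.symm).1 h.btw).lt_of_ne
      ((forwardDist_injective x).ne hyz)
  · refine sbtw_of_btw_not_btw ((btw_iff_forwardDist_le hxy.symm).2 h.le) fun h' => ?_
    exact h.not_ge ((btw_iff_forwardDist_le hxz.symm).1 h'.cyclic_right)

lemma continuous_forwardDist {X : Type*} [TopologicalSpace X] {f g : X → AddCircle p}
    (hf : Continuous f) (hg : Continuous g) (hfg : ∀ t, f t ≠ g t) :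
    Continuous fun t => forwardDist (f t) (g t) := by
  refine continuous_iff_continuousAt.2 fun t => ?_
  have hne : g t - f t ≠ ((0 : ℝ) : AddCircle p) := by
    simpa [sub_eq_zero] using (hfg t).symm
  exact continuous_subtype_val.continuousAt.comp
    ((continuousAt_equivIoc p 0 hne).comp (f := fun t => g t - f t) (hg.sub hf).continuousAt)

theorem sbtw_of_preconnectedSpace {ι X : Type*} [TopologicalSpace X] [PreconnectedSpace X]
    {x : ι → X → AddCircle p} (hx : ∀ i, Continuous (x i))
    (hinj : ∀ t, Function.Injective fun i => x i t) {i j k : ι} {t₀ t₁ : X}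
    (h₀ : sbtw (x i t₀) (x j t₀) (x k t₀)) : sbtw (x i t₁) (x j t₁) (x k t₁) := by
  have hne : ∀ {i j}, i ≠ j → ∀ t, x i t ≠ x j t := fun hij t h => hij (hinj t h)
  have hij : i ≠ j := by rintro rfl; exact sbtw_irrefl_left h₀
  have hik : i ≠ k := by rintro rfl; exact sbtw_irrefl_left_right h₀
  have hjk : j ≠ k := by rintro rfl; exact sbtw_irrefl_right h₀
  rw [sbtw_iff_forwardDist_lt (hne hij _) (hne hik _) (hne hjk _)] at h₀ ⊢
  by_contra! h₁
  obtain ⟨t, ht⟩ := intermediate_value_univ₂ (continuous_forwardDist (hx i) (hx j) (hne hij))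
    (continuous_forwardDist (hx i) (hx k) (hne hik)) h₀.le h₁
  exact hne hjk t (forwardDist_injective _ ht)

end AddCircle

namespace Fin

variable {n : ℕ}

lemma sbtw_sub_right_iff {i j k c : Fin n} : sbtw (i - c) (j - c) (k - c) ↔ sbtw i j k := by
  simp only [Fin.sbtw_iff]
  fin_omega

lemma strictMono_of_map_zero_of_sbtw [NeZero n] {f : Fin n → Fin n}
    (hf : Function.Injective f) (hf₀ : f 0 = 0)
    (hsbtw : ∀ i j k, sbtw i j k → sbtw (f i) (f j) (f k)) : StrictMono f := by
  intro i j hij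
  rcases eq_or_ne i 0 with rfl | hi
  · rw [hf₀, pos_iff_ne_zero']
    exact fun h => hij.ne (hf (hf₀.trans h.symm))
  · have h := hsbtw 0 i j (.inl ⟨(pos_iff_ne_zero' i).2 hi, hij⟩)
    rw [hf₀, Fin.sbtw_iff] at h
    simp only [Fin.lt_def, Fin.val_zero] at h ⊢
    omega

theorem exists_eq_add_of_sbtw [NeZero n] (σ : Equiv.Perm (Fin n))
    (hσ : ∀ i j k, sbtw i j k → sbtw (σ i) (σ j) (σ k)) : ∃ c, ∀ i, σ i = i + c := by
  set ρ := σ.trans (Equiv.subRight (σ 0))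
  have hρ : StrictMono ρ := strictMono_of_map_zero_of_sbtw ρ.injective
    (by simp [ρ]) fun i j k h => sbtw_sub_right_iff.2 (hσ i j k h)
  exact ⟨σ 0, fun i => sub_eq_iff_eq_add.1 hρ.apply_eq⟩

lemma sbtw_apply_iff {α : Type*} [CircularOrder α] {f : Fin n → α}
    (hf : ∀ i j k, i < j → j < k → sbtw (f i) (f j) (f k)) {i j k : Fin n} :
    sbtw (f i) (f j) (f k) ↔ sbtw i j k := by
  have hmap : ∀ {i j k : Fin n}, sbtw i j k → sbtw (f i) (f j) (f k) := by
    rintro i j k (⟨hij, hjk⟩ | ⟨hjk, hki⟩ | ⟨hki, hij⟩)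
    · exact hf i j k hij hjk
    · exact (hf j k i hjk hki).cyclic_right
    · exact (hf k i j hki hij).cyclic_left
  refine ⟨fun h => ?_, hmap⟩
  have hij : i ≠ j := by rintro rfl; exact sbtw_irrefl_left h
  have hik : i ≠ k := by rintro rfl; exact sbtw_irrefl_left_right h
  have hjk : j ≠ k := by rintro rfl; exact sbtw_irrefl_right h
  by_contra h'
  refine sbtw_asymm h (hmap ?_)
  simp only [Fin.sbtw_iff] at h' ⊢
  omega

end Fin

theorem stmt7_general (T : Type*) [TopologicalSpace T] (e : T ≃ₜ Circ) (n : ℕ) (hn : 1 ≤ n)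
    (a : Fin n → T)
    (hmono : ∀ i j k : Fin n, i < j → j < k → sbtw (e (a i)) (e (a j)) (e (a k)))
    (L : C(unitInterval, UConf T n))
    (Ls : Fin n → C(unitInterval, T))
    (hlift : ∀ t, (L t).1 = SymPow.mk fun i => Ls i t)
    (hstart : ∀ i, Ls i 0 = a i)
    (hclose : (L 1).1 = SymPow.mk a) :
    (∀ i j k : Fin n, sbtw (e (a i)) (e (a j)) (e (a k)) →
      sbtw (e (Ls i 1)) (e (Ls j 1)) (e (Ls k 1))) ∧
    (∃ c : ℕ, ∀ i : Fin n, Ls i 1 = a ⟨((i : ℕ) + c) % n, Nat.mod_lt _ hn⟩) := by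
  have hinj : ∀ t, Function.Injective fun i => e (Ls i t) := fun t =>
    e.injective.comp (SymPow.injective_of_simple_mk (hlift t ▸ (L t).2))
  have hcyclic : ∀ i j k : Fin n, sbtw (e (a i)) (e (a j)) (e (a k)) →
      sbtw (e (Ls i 1)) (e (Ls j 1)) (e (Ls k 1)) := fun i j k h =>
    AddCircle.sbtw_of_preconnectedSpace (x := fun i t => e (Ls i t))
      (fun i => e.continuous.comp (Ls i).continuous) hinj (t₀ := 0)
      (by simpa only [hstart] using h)
  obtain ⟨τ, hτ⟩ := SymPow.mk_eq_mk_iff.1 ((hlift 1).symm.trans hclose)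
  have hmonodromy : ∀ i, Ls i 1 = a (τ.symm i) := fun i => by
    simpa using congrFun hτ (τ.symm i)
  have : NeZero n := NeZero.of_pos hn
  obtain ⟨c, hc⟩ := Fin.exists_eq_add_of_sbtw τ.symm fun i j k h => by
    rw [← Fin.sbtw_apply_iff (f := fun i => e (a i)) hmono] at h ⊢
    simpa only [hmonodromy] using hcyclic i j k h
  refine ⟨hcyclic, c, fun i => ?_⟩
  rw [hmonodromy, hc]
  exact congrArg a (Fin.ext (Fin.val_add _ _))

/-- STATEMENT 7: let `T` be an oriented circle (given by an orientation-parametrization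
`e : T ≃ₜ ℝ/ℤ`) and `A = {a 0, …, a (n-1)} ⊆ T` a finite subset with `n ≥ 1` elements,
enumerated compatibly with the cyclic order induced by the orientation. For any loop `L` in
`UConf_n(T)` based at `A`, with lift `L_1, …, L_n`, the monodromy permutation
`μ_L : a i = L_i(0) ↦ L_i(1)` preserves the induced cyclic order on `A`; consequently `μ_L`
is a power `ν^c` of the canonical rotation `ν : a i ↦ a (i+1 mod n)`. -/
theorem stmt7 (T : Type*) [TopologicalSpace T] (e : T ≃ₜ Circ) (n : ℕ) (hn : 1 ≤ n)
    (a : Fin n → T) (ha : Function.Injective a)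
    (hmono : ∀ i j k : Fin n, i < j → j < k → sbtw (e (a i)) (e (a j)) (e (a k)))
    (L : C(unitInterval, UConf T n))
    (Ls : Fin n → C(unitInterval, T))
    (hlift : ∀ t, (L t).1 = SymPow.mk fun i => Ls i t)
    (hstart : ∀ i, Ls i 0 = a i)
    (hclose : (L 1).1 = SymPow.mk a) :
    (∀ i j k : Fin n, sbtw (e (a i)) (e (a j)) (e (a k)) →
      sbtw (e (Ls i 1)) (e (Ls j 1)) (e (Ls k 1))) ∧
    (∃ c : ℕ, ∀ i : Fin n, Ls i 1 = a ⟨((i : ℕ) + c) % n, Nat.mod_lt _ hn⟩) :=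
  stmt7_general T e n hn a hmono L Ls hlift hstart hclose
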